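/- For every visibly pushdown automaton A there exists a deterministic visibly pushdown automaton A' over the same alphabet such that for every well-nested word w, A accepts w if and only if A' accepts w. The states of A' are sets of pairs of states of A and the stack alphabet of A' consists of sets of triples (state, stack symbol, state). -/

import Mathlib

/-- Kinds of symbols in a structured alphabet: open, close, neutral. -/
inductive SymKind | op | cl | ne
deriving DecidableEq

/-- Well-nested words over a structured alphabet, given by a kind function. -/
inductive WellNested {α : Type*} (k : α → SymKind) : List α → Prop
  | nil : WellNested k []
  | neutral {a : α} : k a = SymKind.ne → WellNested k [a]
  | concat {w₁ w₂ : List α} : w₁ ≠ [] → w₂ ≠ [] →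
      WellNested k w₁ → WellNested k w₂ → WellNested k (w₁ ++ w₂)
  | nest {a b : α} {w : List α} : k a = SymKind.op → k b = SymKind.cl →
      WellNested k w → WellNested k (a :: w ++ [b])


/-- The number of symbols of a given kind occurring in a word. -/
def countKind {α : Type*} (k : α → SymKind) (t : SymKind) (w : List α) : ℕ :=
  w.countP (fun s => decide (k s = t))

/-- A visibly pushdown automaton over a structured alphabet (given by `kind`). -/
structure VPA (α Q Γ : Type*) where
  kind : α → SymKind
  /-- push transitions: on an open symbol, move state and push a stack symbol -/
  Δop : Q → α → Q → Γ → Prop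
  /-- pop transitions: on a close symbol, pop the matching top stack symbol -/
  Δcl : Q → α → Γ → Q → Prop
  /-- neutral transitions -/
  Δne : Q → α → Q → Prop
  init : Set Q
  final : Set Q

/-- `A.Steps c w c'`: there is a run of the VPA `A` over the word `w` from
configuration `c` to configuration `c'` (stacks are lists with the top in front). -/
inductive VPA.Steps {α Q Γ : Type*} (A : VPA α Q Γ) :
    Q × List Γ → List α → Q × List Γ → Prop
  | nil (c : Q × List Γ) : VPA.Steps A c [] c
  | op {q q' : Q} {σ : List Γ} {x : Γ} {a : α} {w : List α} {c : Q × List Γ} :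
      A.kind a = SymKind.op → A.Δop q a q' x →
      VPA.Steps A (q', x :: σ) w c → VPA.Steps A (q, σ) (a :: w) c
  | cl {q q' : Q} {σ : List Γ} {x : Γ} {a : α} {w : List α} {c : Q × List Γ} :
      A.kind a = SymKind.cl → A.Δcl q a x q' →
      VPA.Steps A (q', σ) w c → VPA.Steps A (q, x :: σ) (a :: w) c
  | ne {q q' : Q} {σ : List Γ} {a : α} {w : List α} {c : Q × List Γ} :
      A.kind a = SymKind.ne → A.Δne q a q' →
      VPA.Steps A (q', σ) w c → VPA.Steps A (q, σ) (a :: w) c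

/-- A VPA accepts a word if some run from an initial state with empty stack
ends in a final state (with empty stack). -/
def VPA.Accepts {α Q Γ : Type*} (A : VPA α Q Γ) (w : List α) : Prop :=
  ∃ q ∈ A.init, ∃ q' ∈ A.final, A.Steps (q, []) w (q', [])

/-- A VPA is deterministic: one initial state and functional transition relations. -/
def VPA.Deterministic {α Q Γ : Type*} (A : VPA α Q Γ) : Prop :=
  (∃ q₀, A.init = {q₀}) ∧
  (∀ q a q₁ x₁ q₂ x₂, A.Δop q a q₁ x₁ → A.Δop q a q₂ x₂ → q₁ = q₂ ∧ x₁ = x₂) ∧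
  (∀ q a x q₁ q₂, A.Δcl q a x q₁ → A.Δcl q a x q₂ → q₁ = q₂) ∧
  (∀ q a q₁ q₂, A.Δne q a q₁ → A.Δne q a q₂ → q₁ = q₂)

/-! Summary construction. For a well-nested word `w`, `A.summary w` relates `p` to `q` when `A`
can read `w` from `p` to `q` with an empty stack; a run over `w` never looks below its starting
stack, so this describes its runs from every stack. The deterministic automaton stores the
summary of the well-nested factor read since the last pending open symbol. An open symbol pushes
that summary composed with the push transitions, as triples `(p, x, q')`, and restarts from the
identity; the matching close symbol pops it and glues in the summary of the nested factor and the
pop transitions. Hence, by induction on well-nestedness, reading `w` from `S` leads to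
`S ○ A.summary w` with the stack untouched, and by determinism this is the only run. -/

open SetRel

namespace VPA

variable {α Q Γ : Type*} {A : VPA α Q Γ}

theorem Steps.append {c c' c'' : Q × List Γ} {w₁ w₂ : List α}
    (h₁ : A.Steps c w₁ c') (h₂ : A.Steps c' w₂ c'') : A.Steps c (w₁ ++ w₂) c'' := by
  induction h₁ with
  | nil => exact h₂
  | op hk hd _ ih => exact .op hk hd (ih h₂)
  | cl hk hd _ ih => exact .cl hk hd (ih h₂)
  | ne hk hd _ ih => exact .ne hk hd (ih h₂)

theorem Steps.nil_iff {c c' : Q × List Γ} : A.Steps c [] c' ↔ c = c' :=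
  ⟨fun h => by cases h; rfl, fun h => h ▸ .nil c⟩

theorem Steps.cons_op_iff {a : α} {w : List α} (ha : A.kind a = .op) {q : Q} {σ : List Γ}
    {c : Q × List Γ} :
    A.Steps (q, σ) (a :: w) c ↔ ∃ q' x, A.Δop q a q' x ∧ A.Steps (q', x :: σ) w c := by
  refine ⟨fun h => ?_, fun ⟨_, _, hd, h⟩ => .op ha hd h⟩
  cases h with
  | op _ hd h => exact ⟨_, _, hd, h⟩
  | cl hk => cases ha.symm.trans hk
  | ne hk => cases ha.symm.trans hk

theorem Steps.cons_cl_iff {b : α} {w : List α} (hb : A.kind b = .cl) {q : Q} {x : Γ}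
    {σ : List Γ} {c : Q × List Γ} :
    A.Steps (q, x :: σ) (b :: w) c ↔ ∃ q', A.Δcl q b x q' ∧ A.Steps (q', σ) w c := by
  refine ⟨fun h => ?_, fun ⟨_, hd, h⟩ => .cl hb hd h⟩
  cases h with
  | op hk => cases hb.symm.trans hk
  | cl _ hd h => exact ⟨_, hd, h⟩
  | ne hk => cases hb.symm.trans hk

theorem Steps.cons_ne_iff {a : α} {w : List α} (ha : A.kind a = .ne) {q : Q} {σ : List Γ}
    {c : Q × List Γ} :
    A.Steps (q, σ) (a :: w) c ↔ ∃ q', A.Δne q a q' ∧ A.Steps (q', σ) w c := by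
  refine ⟨fun h => ?_, fun ⟨_, hd, h⟩ => .ne ha hd h⟩
  cases h with
  | op hk => cases ha.symm.trans hk
  | cl hk => cases ha.symm.trans hk
  | ne _ hd h => exact ⟨_, hd, h⟩

theorem Steps.append_iff {c c'' : Q × List Γ} {w₁ w₂ : List α} :
    A.Steps c (w₁ ++ w₂) c'' ↔ ∃ c', A.Steps c w₁ c' ∧ A.Steps c' w₂ c'' := by
  refine ⟨fun h => ?_, fun ⟨_, h₁, h₂⟩ => h₁.append h₂⟩
  induction w₁ generalizing c with
  | nil => exact ⟨c, .nil c, h⟩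
  | cons a w₁ ih =>
    cases h with
    | op hk hd h => obtain ⟨c', h₁, h₂⟩ := ih h; exact ⟨c', .op hk hd h₁, h₂⟩
    | cl hk hd h => obtain ⟨c', h₁, h₂⟩ := ih h; exact ⟨c', .cl hk hd h₁, h₂⟩
    | ne hk hd h => obtain ⟨c', h₁, h₂⟩ := ih h; exact ⟨c', .ne hk hd h₁, h₂⟩

theorem Steps.append_stack {q q' : Q} {σ σ' : List Γ} {w : List α}
    (h : A.Steps (q, σ) w (q', σ')) (τ : List Γ) : A.Steps (q, σ ++ τ) w (q', σ' ++ τ) := by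
  generalize hc : (q, σ) = c at h
  generalize hc' : (q', σ') = c' at h
  induction h generalizing q σ with
  | nil => cases hc; cases hc'; exact .nil _
  | op hk hd _ ih => cases hc; exact .op hk hd (ih rfl hc')
  | cl hk hd _ ih => cases hc; exact .cl hk hd (ih rfl hc')
  | ne hk hd _ ih => cases hc; exact .ne hk hd (ih rfl hc')

theorem steps_iff_of_wellNested {w : List α} (hw : WellNested A.kind w) {q q' : Q}
    {σ σ' : List Γ} : A.Steps (q, σ) w (q', σ') ↔ σ' = σ ∧ A.Steps (q, []) w (q', []) := by
  refine ⟨fun h => ?_, fun ⟨hσ, h⟩ => hσ ▸ h.append_stack σ⟩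
  induction hw generalizing q q' σ σ' with
  | nil => simp_all [Steps.nil_iff]
  | neutral ha => simp_all [Steps.cons_ne_iff ha, Steps.nil_iff]
  | concat _ _ _ _ ih₁ ih₂ =>
    obtain ⟨⟨m, τ⟩, h₁, h₂⟩ := Steps.append_iff.1 h
    obtain ⟨rfl, h₁'⟩ := ih₁ h₁
    obtain ⟨rfl, h₂'⟩ := ih₂ h₂
    exact ⟨rfl, h₁'.append h₂'⟩
  | nest ha hb _ ih =>
    obtain ⟨q₁, x, hop, h⟩ := (Steps.cons_op_iff ha).1 h
    obtain ⟨⟨m, τ⟩, hm, h⟩ := Steps.append_iff.1 h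
    obtain ⟨rfl, hm'⟩ := ih hm
    obtain ⟨q₂, hcl, h⟩ := (Steps.cons_cl_iff hb).1 h
    obtain ⟨⟨⟩⟩ := Steps.nil_iff.1 h
    refine ⟨rfl, (Steps.cons_op_iff ha).2 ⟨q₁, x, hop, ?_⟩⟩
    exact (hm'.append_stack [x]).append ((Steps.cons_cl_iff hb).2 ⟨q', hcl, .nil _⟩)

variable (A) in
def summary (w : List α) : SetRel Q Q := {(p, q) | A.Steps (p, []) w (q, [])}

variable (A) in
def neRel (a : α) : SetRel Q Q := {(p, q) | A.Δne p a q}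

theorem summary_nil : A.summary [] = SetRel.id := by
  ext ⟨p, q⟩
  simp [summary, Steps.nil_iff]

theorem summary_neutral {a : α} (ha : A.kind a = .ne) : A.summary [a] = A.neRel a := by
  ext ⟨p, q⟩
  simp [summary, neRel, Steps.cons_ne_iff ha, Steps.nil_iff]

theorem summary_append {w₁ : List α} (hw₁ : WellNested A.kind w₁) (w₂ : List α) :
    A.summary (w₁ ++ w₂) = A.summary w₁ ○ A.summary w₂ := by
  ext ⟨p, r⟩
  refine ⟨fun h => ?_, fun ⟨q, h₁, h₂⟩ => Steps.append h₁ h₂⟩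
  obtain ⟨⟨q, σ⟩, h₁, h₂⟩ := Steps.append_iff.1 h
  obtain ⟨rfl, -⟩ := (steps_iff_of_wellNested hw₁).1 h₁
  exact ⟨q, h₁, h₂⟩

theorem summary_nest {a b : α} {w : List α} (ha : A.kind a = .op) (hb : A.kind b = .cl)
    (hw : WellNested A.kind w) :
    A.summary (a :: w ++ [b]) =
      {(p, r) | ∃ x q q', A.Δop p a q x ∧ (q, q') ∈ A.summary w ∧ A.Δcl q' b x r} := by
  ext ⟨p, r⟩
  constructor
  · intro h
    obtain ⟨q, x, hop, h⟩ := (Steps.cons_op_iff ha).1 h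
    obtain ⟨⟨q', σ⟩, hq, h⟩ := Steps.append_iff.1 h
    obtain ⟨rfl, hq'⟩ := (steps_iff_of_wellNested hw).1 hq
    obtain ⟨r', hcl, h⟩ := (Steps.cons_cl_iff hb).1 h
    obtain ⟨⟨⟩⟩ := Steps.nil_iff.1 h
    exact ⟨x, q, q', hop, hq', hcl⟩
  · rintro ⟨x, q, q', hop, hq, hcl⟩
    refine (Steps.cons_op_iff ha).2 ⟨q, x, hop, ?_⟩
    exact (hq.append_stack [x]).append ((Steps.cons_cl_iff hb).2 ⟨r, hcl, .nil _⟩)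

theorem Deterministic.steps_unique (hA : A.Deterministic) {c c₁ c₂ : Q × List Γ} {w : List α}
    (h₁ : A.Steps c w c₁) (h₂ : A.Steps c w c₂) : c₁ = c₂ := by
  obtain ⟨-, hop, hcl, hne⟩ := hA
  induction h₁ generalizing c₂ with
  | nil => exact Steps.nil_iff.1 h₂
  | op hk hd _ ih =>
    obtain ⟨_, _, hd', h₂⟩ := (Steps.cons_op_iff hk).1 h₂
    obtain ⟨rfl, rfl⟩ := hop _ _ _ _ _ _ hd hd'
    exact ih h₂
  | cl hk hd _ ih =>
    obtain ⟨_, hd', h₂⟩ := (Steps.cons_cl_iff hk).1 h₂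
    cases hcl _ _ _ _ _ hd hd'
    exact ih h₂
  | ne hk hd _ ih =>
    obtain ⟨_, hd', h₂⟩ := (Steps.cons_ne_iff hk).1 h₂
    cases hne _ _ _ _ hd hd'
    exact ih h₂

variable (A) in
def pushSymbol (S : SetRel Q Q) (a : α) : Set (Q × Γ × Q) :=
  {(p, x, q') | ∃ q, (p, q) ∈ S ∧ A.Δop q a q' x}

variable (A) in
def popState (T : Set (Q × Γ × Q)) (S : SetRel Q Q) (b : α) : SetRel Q Q :=
  {(p, r) | ∃ x q q', (p, x, q) ∈ T ∧ (q, q') ∈ S ∧ A.Δcl q' b x r}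

variable (A) in
def determinize : VPA α (SetRel Q Q) (Set (Q × Γ × Q)) where
  kind := A.kind
  Δop S a S' T := S' = SetRel.id ∧ T = A.pushSymbol S a
  Δcl S b T S' := S' = A.popState T S b
  Δne S a S' := S' = S ○ A.neRel a
  init := {SetRel.id}
  final := {S | ∃ p ∈ A.init, ∃ q ∈ A.final, (p, q) ∈ S}

theorem determinize_deterministic : A.determinize.Deterministic := by
  refine ⟨⟨_, rfl⟩, ?_, ?_, ?_⟩
  · rintro _ _ _ _ _ _ ⟨rfl, rfl⟩ ⟨rfl, rfl⟩
    exact ⟨rfl, rfl⟩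
  · rintro _ _ _ _ _ rfl rfl
    rfl
  · rintro _ _ _ _ rfl rfl
    rfl

theorem comp_summary_nest (S : SetRel Q Q) {a b : α} {w : List α} (ha : A.kind a = .op)
    (hb : A.kind b = .cl) (hw : WellNested A.kind w) :
    S ○ A.summary (a :: w ++ [b]) = A.popState (A.pushSymbol S a) (A.summary w) b := by
  ext ⟨p, r⟩
  simp only [summary_nest ha hb hw, mem_comp, popState, pushSymbol, Set.mem_ofPred_eq]
  constructor
  · rintro ⟨q₀, hS, x, q, q', hop, hq, hcl⟩
    exact ⟨x, q, q', ⟨q₀, hS, hop⟩, hq, hcl⟩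
  · rintro ⟨x, q, q', ⟨q₀, hS, hop⟩, hq, hcl⟩
    exact ⟨q₀, hS, x, q, q', hop, hq, hcl⟩

theorem determinize_steps {w : List α} (hw : WellNested A.kind w) (S : SetRel Q Q)
    (σ : List (Set (Q × Γ × Q))) : A.determinize.Steps (S, σ) w (S ○ A.summary w, σ) := by
  induction hw generalizing S σ with
  | nil => rw [summary_nil, comp_id]; exact .nil _
  | neutral ha => rw [summary_neutral ha]; exact .ne ha rfl (.nil _)
  | concat _ _ hw₁ _ ih₁ ih₂ =>
    rw [summary_append hw₁, ← comp_assoc]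
    exact (ih₁ S σ).append (ih₂ _ σ)
  | @nest a _ _ ha hb hw ih =>
    rw [comp_summary_nest S ha hb hw]
    have inner := ih SetRel.id (A.pushSymbol S a :: σ)
    rw [id_comp] at inner
    exact .op ha ⟨rfl, rfl⟩ (inner.append (.cl hb rfl (.nil _)))

theorem determinize_accepts_iff {w : List α} (hw : WellNested A.kind w) :
    A.determinize.Accepts w ↔ A.Accepts w := by
  have run := determinize_steps hw SetRel.id []
  rw [id_comp] at run
  constructor
  · rintro ⟨_, rfl, S, ⟨p, hp, q, hq, hpq⟩, h⟩
    obtain ⟨rfl, -⟩ := Prod.mk.inj (determinize_deterministic.steps_unique h run)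
    exact ⟨p, hp, q, hq, hpq⟩
  · rintro ⟨p, hp, q, hq, hpq⟩
    exact ⟨_, rfl, _, ⟨p, hp, q, hq, hpq⟩, run⟩

end VPA

/-- Determinization of VPAs: every VPA has an equivalent deterministic VPA on
well-nested words, whose states are sets of pairs of states and whose stack
symbols are sets of (state, stack symbol, state) triples. -/
theorem vpa_determinization {α Q Γ : Type*} (A : VPA α Q Γ) :
    ∃ A' : VPA α (Set (Q × Q)) (Set (Q × Γ × Q)),
      A'.kind = A.kind ∧ A'.Deterministic ∧
      ∀ w : List α, WellNested A.kind w → (A.Accepts w ↔ A'.Accepts w) :=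
  ⟨A.determinize, rfl, VPA.determinize_deterministic,
    fun _ hw => (VPA.determinize_accepts_iff hw).symm⟩
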